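/- arXiv:2104.04583 — 3 statements merged into one kernel-verified Lean document; each statement's English description precedes it below -/
import Mathlib

section
/- Let L be a nondegenerate integral lattice of signature (1,n), h ∈ L with h² = 2d ≥ 4, and let l₁ ≠ l₂ be two vectors with l₁² = l₂² = −2, l₁·h = l₂·h = 1, and l₁·l₂ ≥ 0. Then l₁·l₂ ≤ 2. Moreover, if l₁·l₂ = 2, then the vector e := l₁ + l₂ satisfies e² = 0 and e·h = 2. -/
/-!
The vector `w = d • (l₁ + l₂) - h` is orthogonal to `h`, and `h² > 0`, so by the Hodge index
theorem `w² ≤ 0`. With `e = l₁ + l₂` one has `e² = 2 l₁·l₂ - 4` and `e·h = 2`, hence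
`w² = d² (2 l₁·l₂ - 4) - 2d ≤ 0`, which for `d ≥ 2` forces `l₁·l₂ ≤ 2`.
The Hodge index theorem itself is a reverse Cauchy–Schwarz inequality in Minkowski coordinates.
-/

open Matrix

/-- The bilinear form `B` is symmetric. -/
def IsSymmBilin {L : Type*} [AddCommGroup L] [Module ℤ L]
    (B : L →ₗ[ℤ] L →ₗ[ℤ] ℤ) : Prop := ∀ x y : L, B x y = B y x

/-- The integral lattice `(L, B)` is nondegenerate of signature `(1, n)`:
it is free of rank `n + 1` and its real Gram matrix is congruent to
`diag(1, -1, …, -1)`. -/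
def HasSigOneN {L : Type*} [AddCommGroup L] [Module ℤ L]
    (B : L →ₗ[ℤ] L →ₗ[ℤ] ℤ) (n : ℕ) : Prop :=
  ∃ b : Module.Basis (Fin (n + 1)) ℤ L, ∃ P : Matrix (Fin (n + 1)) (Fin (n + 1)) ℝ,
    IsUnit P.det ∧
      P.transpose * (Matrix.of fun i j => ((B (b i) (b j) : ℤ) : ℝ)) * P =
        Matrix.diagonal (fun i => if i = 0 then (1 : ℝ) else -1)

/-- The Gram matrix of a triple of vectors. -/
def gram3 {L : Type*} [AddCommGroup L] [Module ℤ L]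
    (B : L →ₗ[ℤ] L →ₗ[ℤ] ℤ) (x y z : L) : Matrix (Fin 3) (Fin 3) ℤ :=
  !![B x x, B x y, B x z; B y x, B y y, B y z; B z x, B z y, B z z]

def minkowskiSign (m : ℕ) : Fin (m + 1) → ℝ := fun i => if i = 0 then 1 else -1

theorem dotProduct_diagonal_minkowskiSign_mulVec {m : ℕ} (u v : Fin (m + 1) → ℝ) :
    u ⬝ᵥ (diagonal (minkowskiSign m) *ᵥ v) =
      u 0 * v 0 - ∑ i : Fin m, u i.succ * v i.succ := by
  simp [dotProduct, mulVec_diagonal, Fin.sum_univ_succ, minkowskiSign, Fin.succ_ne_zero]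
  ring

theorem sq_le_sum_sq_of_mul_eq_sum {ι : Type*} (s : Finset ι) {a₀ y₀ : ℝ} {a y : ι → ℝ}
    (ha : ∑ i ∈ s, a i ^ 2 < a₀ ^ 2) (horth : a₀ * y₀ = ∑ i ∈ s, a i * y i) :
    y₀ ^ 2 ≤ ∑ i ∈ s, y i ^ 2 := by
  have hcs := Finset.sum_mul_sq_le_sq_mul_sq s a y
  rw [← horth] at hcs
  have hy : 0 ≤ ∑ i ∈ s, y i ^ 2 := Finset.sum_nonneg fun i _ => sq_nonneg _
  have ha0 : 0 < a₀ ^ 2 := (Finset.sum_nonneg fun i _ => sq_nonneg (a i)).trans_lt ha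
  by_contra! hlt
  nlinarith [mul_le_mul_of_nonneg_right ha.le hy]

theorem dotProduct_diagonal_minkowskiSign_self_nonpos {m : ℕ} {a y : Fin (m + 1) → ℝ}
    (ha : 0 < a ⬝ᵥ (diagonal (minkowskiSign m) *ᵥ a))
    (hy : a ⬝ᵥ (diagonal (minkowskiSign m) *ᵥ y) = 0) :
    y ⬝ᵥ (diagonal (minkowskiSign m) *ᵥ y) ≤ 0 := by
  rw [dotProduct_diagonal_minkowskiSign_mulVec] at ha hy ⊢
  have := sq_le_sum_sq_of_mul_eq_sum Finset.univ (a₀ := a 0) (y₀ := y 0)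
    (a := fun i : Fin m => a i.succ) (y := fun i : Fin m => y i.succ)
    (by simp only [sq]; linarith) (by linarith)
  simp only [sq] at this
  linarith

theorem dotProduct_transpose_mul_mul_mulVec {m : Type*} [Fintype m] (P A : Matrix m m ℝ)
    (u v : m → ℝ) :
    u ⬝ᵥ ((Pᵀ * A * P) *ᵥ v) = (P *ᵥ u) ⬝ᵥ (A *ᵥ (P *ᵥ v)) := by
  rw [← mulVec_mulVec, ← mulVec_mulVec, dotProduct_mulVec, vecMul_transpose]

theorem HasSigOneN.exists_coordinates {L : Type*} [AddCommGroup L] [Module ℤ L]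
    {B : L →ₗ[ℤ] L →ₗ[ℤ] ℤ} {n : ℕ} (hsig : HasSigOneN B n) :
    ∃ φ : L → Fin (n + 1) → ℝ, ∀ x y, (B x y : ℝ) =
      φ x ⬝ᵥ (diagonal (minkowskiSign n) *ᵥ φ y) := by
  obtain ⟨b, P, hPdet, hP : _ = diagonal (minkowskiSign n)⟩ := hsig
  have hPφ (x : L) : P *ᵥ (P⁻¹ *ᵥ ((↑) ∘ b.repr x)) = (↑) ∘ b.repr x := by
    rw [mulVec_mulVec, mul_nonsing_inv P hPdet, one_mulVec]
  refine ⟨fun x => P⁻¹ *ᵥ ((↑) ∘ b.repr x), fun x y => ?_⟩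
  rw [← hP, dotProduct_transpose_mul_mul_mulVec, hPφ, hPφ,
    apply_eq_dotProduct_toMatrix₂_mulVec b b B x y]
  simp [dotProduct, mulVec, LinearMap.toMatrix₂_apply]

theorem HasSigOneN.self_nonpos_of_orthogonal {L : Type*} [AddCommGroup L] [Module ℤ L]
    {B : L →ₗ[ℤ] L →ₗ[ℤ] ℤ} {n : ℕ} (hsig : HasSigOneN B n) {h x : L}
    (hh : 0 < B h h) (hx : B h x = 0) : B x x ≤ 0 := by
  obtain ⟨φ, hφ⟩ := hsig.exists_coordinates
  have := dotProduct_diagonal_minkowskiSign_self_nonpos (a := φ h) (y := φ x)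
    (by rw [← hφ]; exact_mod_cast hh) (by rw [← hφ]; exact_mod_cast hx)
  rw [← hφ] at this
  exact_mod_cast this

theorem IsSymmBilin.apply_add_add {L : Type*} [AddCommGroup L] [Module ℤ L]
    {B : L →ₗ[ℤ] L →ₗ[ℤ] ℤ} (hB : IsSymmBilin B) (x y : L) :
    B (x + y) (x + y) = B x x + 2 * B x y + B y y := by
  simp only [map_add, LinearMap.add_apply, hB y x]
  ring

theorem IsSymmBilin.apply_smul_sub_smul_sub {L : Type*} [AddCommGroup L] [Module ℤ L]
    {B : L →ₗ[ℤ] L →ₗ[ℤ] ℤ} (hB : IsSymmBilin B) (c : ℤ) (x y : L) :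
    B (c • x - y) (c • x - y) = c ^ 2 * B x x - 2 * c * B x y + B y y := by
  simp only [map_sub, LinearMap.map_smul_of_tower, LinearMap.sub_apply, LinearMap.smul_apply,
    Int.zsmul_eq_mul, hB y x]
  ring

theorem stmt1_general {L : Type*} [AddCommGroup L] [Module ℤ L]
    (n : ℕ) (B : L →ₗ[ℤ] L →ₗ[ℤ] ℤ)
    (hB : IsSymmBilin B) (hsig : HasSigOneN B n)
    (h : L) (d : ℤ) (hd : 2 ≤ d) (hh : B h h = 2 * d)
    (l₁ l₂ : L)
    (hl₁ : B l₁ l₁ = -2) (hl₂ : B l₂ l₂ = -2)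
    (hl₁h : B l₁ h = 1) (hl₂h : B l₂ h = 1) :
    B l₁ l₂ ≤ 2 ∧
      (B l₁ l₂ = 2 →
        B (l₁ + l₂) (l₁ + l₂) = 0 ∧ B (l₁ + l₂) h = 2) := by
  have hee : B (l₁ + l₂) (l₁ + l₂) = 2 * B l₁ l₂ - 4 := by
    rw [hB.apply_add_add, hl₁, hl₂]; ring
  have heh : B (l₁ + l₂) h = 2 := by
    rw [map_add, LinearMap.add_apply, hl₁h, hl₂h]; rfl
  have hw := hsig.self_nonpos_of_orthogonal (h := h) (x := d • (l₁ + l₂) - h) (by omega) (by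
    rw [map_sub, LinearMap.map_smul_of_tower, Int.zsmul_eq_mul, hB, heh, hh]; ring)
  rw [hB.apply_smul_sub_smul_sub, hee, heh, hh] at hw
  refine ⟨by nlinarith, fun ht => ⟨by omega, heh⟩⟩

theorem stmt1 {L : Type*} [AddCommGroup L] [Module ℤ L]
    (n : ℕ) (B : L →ₗ[ℤ] L →ₗ[ℤ] ℤ)
    (hB : IsSymmBilin B) (hsig : HasSigOneN B n)
    (h : L) (d : ℤ) (hd : 2 ≤ d) (hh : B h h = 2 * d)
    (l₁ l₂ : L) (hne : l₁ ≠ l₂)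
    (hl₁ : B l₁ l₁ = -2) (hl₂ : B l₂ l₂ = -2)
    (hl₁h : B l₁ h = 1) (hl₂h : B l₂ h = 1) (hpos : 0 ≤ B l₁ l₂) :
    B l₁ l₂ ≤ 2 ∧
      (B l₁ l₂ = 2 →
        B (l₁ + l₂) (l₁ + l₂) = 0 ∧ B (l₁ + l₂) h = 2) :=
  stmt1_general n B hB hsig h d hd hh l₁ l₂ hl₁ hl₂ hl₁h hl₂h
end

section
/- Let L be a nondegenerate integral lattice of signature (1,n), h ∈ L with h² = 8, and ι ∈ L with ι² = 0 and ι·h = 3. If l ∈ L satisfies l² = −2, l·h = 1, and l·ι ≥ 0, then l·ι ≤ 1. -/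
/-!
Express the real extension of `B` in Minkowski coordinates. Since `h² > 0`, the reversed
Cauchy–Schwarz inequality makes `B` negative semidefinite on `h⊥`, so the projections
`u = h² x - (h·x) h` and `v = h² y - (h·y) h` satisfy `(u·v)² ≤ u² v²`; and
`u² v² - (u·v)² = (h²)³ det Gram(h, x, y)`. For `(h, ι, l)` this determinant is
`18 + 6a - 8a²` with `a = l·ι`, which forces `a ≤ 1`.
-/

open Matrix

open Finset

def minkowski {n : ℕ} (x y : Fin (n + 1) → ℝ) : ℝ :=
  x 0 * y 0 - ∑ i : Fin n, x i.succ * y i.succ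

lemma minkowski_nonpos_of_orthogonal {n : ℕ} {x y : Fin (n + 1) → ℝ}
    (hx : 0 < minkowski x x) (hxy : minkowski x y = 0) : minkowski y y ≤ 0 := by
  unfold minkowski at *
  have hcs := sum_mul_sq_le_sq_mul_sq univ (fun i : Fin n => x i.succ) fun i => y i.succ
  have hX : 0 ≤ ∑ i : Fin n, x i.succ * x i.succ := sum_nonneg fun i _ => mul_self_nonneg _
  have hY : 0 ≤ ∑ i : Fin n, y i.succ * y i.succ := sum_nonneg fun i _ => mul_self_nonneg _
  simp only [← sq] at hcs hX hY hx ⊢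
  by_contra! hy
  have hlt : (∑ i : Fin n, x i.succ ^ 2) * ∑ i : Fin n, y i.succ ^ 2 < x 0 ^ 2 * y 0 ^ 2 :=
    mul_lt_mul'' (by linarith) (by linarith) hX hY
  rw [← sub_eq_zero.mp hxy] at hcs
  linarith [mul_pow (x 0) (y 0) 2]

lemma minkowski_eq_sum_ite {n : ℕ} (x y : Fin (n + 1) → ℝ) :
    minkowski x y = ∑ i, (if i = 0 then (1 : ℝ) else -1) * x i * y i := by
  simp [Fin.sum_univ_succ, minkowski, Fin.succ_ne_zero, sub_eq_add_neg]

section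

variable {L : Type*} [AddCommGroup L] [Module ℤ L] {B : L →ₗ[ℤ] L →ₗ[ℤ] ℤ} {n : ℕ}

lemma HasSigOneN.exists_minkowski_coords (hsig : HasSigOneN B n) :
    ∃ c : L → Fin (n + 1) → ℝ, ∀ x y, (B x y : ℝ) = minkowski (c x) (c y) := by
  obtain ⟨b, P, hdet, hPAP⟩ := hsig
  set A := Matrix.of fun i j => ((B (b i) (b j) : ℤ) : ℝ)
  set r : L → Fin (n + 1) → ℝ := fun x j => (b.repr x j : ℝ)
  have hA : A = (P⁻¹)ᵀ * diagonal (fun i => if i = 0 then (1 : ℝ) else -1) * P⁻¹ := by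
    rw [← hPAP, transpose_nonsing_inv, Matrix.mul_assoc, Matrix.mul_assoc,
      Matrix.mul_nonsing_inv _ hdet, Matrix.mul_one, ← Matrix.mul_assoc,
      Matrix.nonsing_inv_mul _ (by rwa [det_transpose]), Matrix.one_mul]
  have hBA : ∀ x y, (B x y : ℝ) = r x ⬝ᵥ A *ᵥ r y := by
    intro x y
    rw [apply_eq_dotProduct_toMatrix₂_mulVec b b B x y]
    simp [r, A, dotProduct, mulVec]
  refine ⟨fun x => P⁻¹ *ᵥ r x, fun x y => ?_⟩
  rw [hBA, hA, ← mulVec_mulVec, ← mulVec_mulVec, dotProduct_mulVec, vecMul_transpose,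
    minkowski_eq_sum_ite]
  simp only [dotProduct, mulVec_diagonal]
  exact sum_congr rfl fun i _ => by ring

lemma HasSigOneN.nonpos_of_orthogonal (hsig : HasSigOneN B n) {h u : L} (hh : 0 < B h h)
    (hhu : B h u = 0) : B u u ≤ 0 := by
  obtain ⟨c, hc⟩ := hsig.exists_minkowski_coords
  have := minkowski_nonpos_of_orthogonal (x := c h) (y := c u) (by rw [← hc]; exact_mod_cast hh)
    (by rw [← hc, hhu, Int.cast_zero])
  rw [← hc] at this
  exact_mod_cast this

lemma sq_le_mul_of_forall_nonpos {p q c : ℤ}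
    (hform : ∀ s t : ℤ, s ^ 2 * p + 2 * s * t * c + t ^ 2 * q ≤ 0) : c ^ 2 ≤ p * q := by
  have hp := hform 1 0
  have hq := hform 0 1
  have h1 := hform q (-c)
  have h2 := hform c (-p)
  have h3 := hform 1 c
  -- `(q, -c)` and `(c, -p)` give `q (pq - c²) ≤ 0` and `p (pq - c²) ≤ 0`;
  -- `(1, c)` settles `p = q = 0`.
  by_contra! hlt
  nlinarith

lemma HasSigOneN.sq_le_mul_of_orthogonal (hsig : HasSigOneN B n) (hB : IsSymmBilin B)
    {h u v : L} (hh : 0 < B h h) (hhu : B h u = 0) (hhv : B h v = 0) :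
    B u v ^ 2 ≤ B u u * B v v := by
  refine sq_le_mul_of_forall_nonpos fun s t => ?_
  have := hsig.nonpos_of_orthogonal hh (u := s • u + t • v) (by simp [hhu, hhv])
  simp only [map_add, map_zsmul, LinearMap.add_apply, LinearMap.smul_apply, smul_eq_mul,
    hB v u] at this
  linarith

lemma HasSigOneN.det_gram3_nonneg (hsig : HasSigOneN B n) (hB : IsSymmBilin B) {h : L}
    (hh : 0 < B h h) (x y : L) : 0 ≤ (gram3 B h x y).det := by
  set u := B h h • x - B h x • h
  set v := B h h • y - B h y • h
  have hhu : B h u = 0 := by simp only [u, map_sub, map_zsmul, smul_eq_mul]; ring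
  have hhv : B h v = 0 := by simp only [v, map_sub, map_zsmul, smul_eq_mul]; ring
  have hcs := hsig.sq_le_mul_of_orthogonal hB hh hhu hhv
  have hschur : B u u * B v v - B u v ^ 2 = B h h ^ 3 * (gram3 B h x y).det := by
    simp only [u, v, gram3, det_fin_three, map_sub, map_zsmul, LinearMap.sub_apply,
      LinearMap.smul_apply, smul_eq_mul, of_apply, cons_val', cons_val_zero, cons_val_one,
      cons_val_fin_one, Matrix.cons_val, hB x h, hB y h, hB y x]
    ring
  exact nonneg_of_mul_nonneg_right (hschur ▸ sub_nonneg.mpr hcs) (pow_pos hh 3)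

end

theorem stmt6_general {L : Type*} [AddCommGroup L] [Module ℤ L]
    (n : ℕ) (B : L →ₗ[ℤ] L →ₗ[ℤ] ℤ)
    (hB : IsSymmBilin B) (hsig : HasSigOneN B n)
    (h : L) (hh : B h h = 8)
    (ι : L) (hι : B ι ι = 0) (hιh : B ι h = 3)
    (l : L) (hl : B l l = -2) (hlh : B l h = 1) :
    B l ι ≤ 1 := by
  have hdet : 0 ≤ 18 + 6 * B l ι - 8 * B l ι ^ 2 := by
    have := hsig.det_gram3_nonneg hB (h := h) (by rw [hh]; norm_num) ι l
    simp only [gram3, det_fin_three, of_apply, cons_val', cons_val_zero, cons_val_one,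
      cons_val_fin_one, Matrix.cons_val, hB h ι, hB h l, hB ι l, hh, hι, hιh, hl, hlh] at this
    linarith
  nlinarith

theorem stmt6 {L : Type*} [AddCommGroup L] [Module ℤ L]
    (n : ℕ) (B : L →ₗ[ℤ] L →ₗ[ℤ] ℤ)
    (hB : IsSymmBilin B) (hsig : HasSigOneN B n)
    (h : L) (hh : B h h = 8)
    (ι : L) (hι : B ι ι = 0) (hιh : B ι h = 3)
    (l : L) (hl : B l l = -2) (hlh : B l h = 1) (hpos : 0 ≤ B l ι) :
    B l ι ≤ 1 :=
  stmt6_general n B hB hsig h hh ι hι hιh l hl hlh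
end

section
/- Let L be a nondegenerate integral lattice of signature (1,n), h ∈ L with h² = 2d ≥ 4. Assume L contains no vector e with e² = 0 and e·h ∈ {1, 2}. Let v₁, …, v_k ∈ L (k ≥ 3, indices mod k) satisfy: vᵢ² = −2, vᵢ·h ∈ {0,1}, vᵢ·v_{i+1} = 1 for all i, and vᵢ·vⱼ ≥ 0 for all i ≠ j. If the sum e := v₁ + ⋯ + v_k is nonzero, then at least 3 of the vᵢ satisfy vᵢ·h = 1. -/
/-!
Let `e = ∑ vᵢ`, so that `e·h` is the number `m` of lines. In each row of the Gram matrix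
of the cycle the two neighbours cancel `vᵢ² = -2`, so `e² ≥ 0`; moreover `e²` is even. By the
Hodge index inequality in signature `(1, n)`, `e²·h² ≤ (e·h)²`, so `m ≤ 2` and `h² ≥ 4`
force `e² = 0`. Then `m = 0` would put `e` in the negative definite `h⊥`, i.e. `e = 0`,
and `m ∈ {1, 2}` is excluded by hypothesis.
-/

open Matrix

def minkowskiForm {n : ℕ} (a b : Fin (n + 1) → ℝ) : ℝ :=
  a 0 * b 0 - ∑ i : Fin n, a i.succ * b i.succ

lemma minkowskiForm_eq_dotProduct {n : ℕ} (a b : Fin (n + 1) → ℝ) :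
    minkowskiForm a b =
      a ⬝ᵥ (diagonal (fun i => if i = 0 then (1 : ℝ) else -1) *ᵥ b) := by
  simp [minkowskiForm, dotProduct, mulVec_diagonal, Fin.sum_univ_succ, sub_eq_add_neg]

lemma eq_zero_of_minkowskiForm_eq_zero {n : ℕ} {a b : Fin (n + 1) → ℝ}
    (hb : 0 < minkowskiForm b b) (hab : minkowskiForm a b = 0)
    (ha : 0 ≤ minkowskiForm a a) : a = 0 := by
  simp only [minkowskiForm, ← sq] at hb hab ha
  set A := ∑ i : Fin n, a i.succ ^ 2
  set C := ∑ i : Fin n, b i.succ ^ 2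
  have hA : 0 ≤ A := Finset.sum_nonneg fun i _ => sq_nonneg _
  have hC : 0 ≤ C := Finset.sum_nonneg fun i _ => sq_nonneg _
  have hcs : (a 0 * b 0) ^ 2 ≤ A * C := by
    rw [sub_eq_zero.mp hab]
    exact Finset.sum_mul_sq_le_sq_mul_sq _ _ _
  have ha0 : a 0 = 0 := by
    have : A * C ≤ a 0 ^ 2 * C := mul_le_mul_of_nonneg_right (by linarith) hC
    have : a 0 ^ 2 * (b 0 ^ 2 - C) ≤ 0 := by nlinarith
    exact pow_eq_zero_iff two_ne_zero |>.mp <| le_antisymm (by nlinarith) (sq_nonneg _)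
  have hA0 : A = 0 := by rw [ha0] at ha; linarith
  have htail (i : Fin n) : a i.succ = 0 :=
    pow_eq_zero_iff two_ne_zero |>.mp <|
      (Finset.sum_eq_zero_iff_of_nonneg fun i _ => sq_nonneg (a i.succ)).mp hA0 i
        (Finset.mem_univ i)
  funext i
  exact Fin.cases ha0 htail i

section Lattice

variable {L : Type*} [AddCommGroup L] [Module ℤ L] {B : L →ₗ[ℤ] L →ₗ[ℤ] ℤ}

lemma HasSigOneN.exists_minkowskiForm_embedding {n : ℕ} (hsig : HasSigOneN B n) :
    ∃ φ : L → Fin (n + 1) → ℝ, (∀ x, φ x = 0 → x = 0) ∧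
      ∀ x y, (B x y : ℝ) = minkowskiForm (φ x) (φ y) := by
  obtain ⟨b, P, hP, hcong⟩ := hsig
  let c : L → Fin (n + 1) → ℝ := fun x i => b.repr x i
  let φ : L → Fin (n + 1) → ℝ := fun x => P⁻¹ *ᵥ c x
  have hc (x : L) : c x = P *ᵥ φ x := by
    rw [mulVec_mulVec, mul_nonsing_inv P hP, one_mulVec]
  refine ⟨φ, fun x hx => ?_, fun x y => ?_⟩
  · have hcx : c x = 0 := by rw [hc x, hx, mulVec_zero]
    refine b.repr.map_eq_zero_iff.mp (Finsupp.ext fun i => ?_)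
    simpa [c] using congrFun hcx i
  · have hB : (B x y : ℝ) =
        c x ⬝ᵥ (of fun i j => ((B (b i) (b j) : ℤ) : ℝ)) *ᵥ c y := by
      rw [apply_eq_dotProduct_toMatrix₂_mulVec b b B x y,
        ← eq_intCast (Int.castRingHom ℝ), RingHom.map_dotProduct]
      congr 1
      funext i
      rw [Function.comp_apply, RingHom.map_mulVec]
      congr 1
      ext i j
      simp
    rw [hB, hc x, hc y, minkowskiForm_eq_dotProduct, ← hcong, ← mulVec_mulVec,
      ← mulVec_mulVec, dotProduct_mulVec (φ x) Pᵀ, vecMul_transpose]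

lemma HasSigOneN.eq_zero_of_orthogonal {n : ℕ} (hsig : HasSigOneN B n) {h x : L}
    (hh : 0 < B h h) (hxh : B x h = 0) (hx : 0 ≤ B x x) : x = 0 := by
  obtain ⟨φ, hφ, hBφ⟩ := hsig.exists_minkowskiForm_embedding
  refine hφ x (eq_zero_of_minkowskiForm_eq_zero (b := φ h) ?_ ?_ ?_) <;> rw [← hBφ]
  · exact_mod_cast hh
  · exact_mod_cast hxh
  · exact_mod_cast hx

lemma HasSigOneN.apply_self_mul_le_sq {n : ℕ} (hB : IsSymmBilin B) (hsig : HasSigOneN B n)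
    {h : L} (hh : 0 < B h h) (x : L) : B x x * B h h ≤ B x h ^ 2 := by
  -- `f` is `h²` times the projection of `x` to `h⊥`.
  set f := B h h • x - B x h • h
  have hfh : B f h = 0 := by simp [f]; ring
  have hff : B f f = B h h * (B h h * B x x - B x h ^ 2) := by
    simp [f, hB h x]; ring
  have : B f f ≤ 0 := by
    by_contra! hf
    simp [hsig.eq_zero_of_orthogonal hh hfh hf.le] at hf
  nlinarith

lemma even_apply_sum_self (hB : IsSymmBilin B) {ι : Type*} (s : Finset ι) (v : ι → L)
    (hv : ∀ i ∈ s, Even (B (v i) (v i))) : Even (B (∑ i ∈ s, v i) (∑ i ∈ s, v i)) := by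
  classical
  induction s using Finset.induction_on with
  | empty => simp
  | insert a s ha ih =>
    rw [Finset.sum_insert ha]
    have hexp : B (v a + ∑ i ∈ s, v i) (v a + ∑ i ∈ s, v i) = B (v a) (v a) +
        2 * B (v a) (∑ i ∈ s, v i) + B (∑ i ∈ s, v i) (∑ i ∈ s, v i) := by
      simp only [map_add, LinearMap.add_apply, hB (∑ i ∈ s, v i) (v a)]; ring
    rw [hexp]
    exact ((hv a (s.mem_insert_self a)).add (even_two_mul _)).add
      (ih fun i hi => hv i (Finset.mem_insert_of_mem hi))

lemma apply_sum_eq_card_filter {ι : Type*} [Fintype ι] (v : ι → L) (h : L)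
    (hvh : ∀ i, B (v i) h = 0 ∨ B (v i) h = 1) :
    B (∑ i, v i) h = (Finset.univ.filter fun i => B (v i) h = 1).card := by
  rw [map_sum, LinearMap.sum_apply, Finset.card_filter, Nat.cast_sum]
  refine Finset.sum_congr rfl fun i _ => ?_
  rcases hvh i with h0 | h1 <;> simp [*]

section Cycle

variable {k : ℕ} [NeZero k] {v : ZMod k → L}

lemma sum_apply_cycle_nonneg (hB : IsSymmBilin B) (hk : 3 ≤ k)
    (hv : ∀ i, B (v i) (v i) = -2) (hcyc : ∀ i, B (v i) (v (i + 1)) = 1)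
    (hpos : ∀ i j, i ≠ j → 0 ≤ B (v i) (v j)) (i : ZMod k) :
    0 ≤ ∑ j, B (v i) (v j) := by
  have : Fact (1 < k) := ⟨by omega⟩
  have hne : (-1 : ZMod k) ≠ 1 := fun h => by
    have h2 : ((2 : ℕ) : ZMod k) = 0 := by push_cast; linear_combination -h
    have := Nat.le_of_dvd two_pos ((ZMod.natCast_eq_zero_iff 2 k).mp h2)
    omega
  have hprev : B (v i) (v (i - 1)) = 1 := by
    rw [hB, ← hcyc (i - 1), sub_add_cancel]
  have hnbhd : ∑ j ∈ {i - 1, i, i + 1}, B (v i) (v j) = 0 := by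
    rw [Finset.sum_insert (by simp [sub_eq_add_neg, hne]),
      Finset.sum_insert (by simp), Finset.sum_singleton, hprev, hv, hcyc]
    norm_num
  rw [← Finset.sum_sdiff (Finset.subset_univ {i - 1, i, i + 1}), hnbhd, add_zero]
  exact Finset.sum_nonneg fun j hj => hpos i j (by rintro rfl; simp at hj)

lemma apply_sum_cycle_self_nonneg (hB : IsSymmBilin B) (hk : 3 ≤ k)
    (hv : ∀ i, B (v i) (v i) = -2) (hcyc : ∀ i, B (v i) (v (i + 1)) = 1)
    (hpos : ∀ i j, i ≠ j → 0 ≤ B (v i) (v j)) :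
    0 ≤ B (∑ i, v i) (∑ i, v i) := by
  simp only [map_sum, LinearMap.sum_apply]
  rw [Finset.sum_comm]
  exact Finset.sum_nonneg fun i _ => sum_apply_cycle_nonneg hB hk hv hcyc hpos i

end Cycle

end Lattice

theorem stmt17 {L : Type*} [AddCommGroup L] [Module ℤ L]
    (n : ℕ) (B : L →ₗ[ℤ] L →ₗ[ℤ] ℤ)
    (hB : IsSymmBilin B) (hsig : HasSigOneN B n)
    (h : L) (d : ℤ) (hd : 2 ≤ d) (hh : B h h = 2 * d)
    (hnoiso : ¬ ∃ e : L, B e e = 0 ∧ (B e h = 1 ∨ B e h = 2))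
    (k : ℕ) [NeZero k] (hk : 3 ≤ k) (v : ZMod k → L)
    (hv : ∀ i, B (v i) (v i) = -2)
    (hvh : ∀ i, B (v i) h = 0 ∨ B (v i) h = 1)
    (hcyc : ∀ i, B (v i) (v (i + 1)) = 1)
    (hpos : ∀ i j, i ≠ j → 0 ≤ B (v i) (v j))
    (hsum : (∑ i : ZMod k, v i) ≠ 0) :
    3 ≤ (Finset.univ.filter fun i : ZMod k => B (v i) h = 1).card := by
  set m := (Finset.univ.filter fun i : ZMod k => B (v i) h = 1).card
  by_contra! hm
  set e := ∑ i : ZMod k, v i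
  have hh0 : 0 < B h h := by omega
  have heh : B e h = m := apply_sum_eq_card_filter v h hvh
  have hee_nonneg : 0 ≤ B e e := apply_sum_cycle_self_nonneg hB hk hv hcyc hpos
  have hee_even : Even (B e e) :=
    even_apply_sum_self hB _ v fun i _ => ⟨-1, by rw [hv]; norm_num⟩
  have hee : B e e = 0 := by
    have hcs := hsig.apply_self_mul_le_sq hB hh0 e
    rw [heh, hh] at hcs
    have hm4 : (m : ℤ) ^ 2 ≤ 4 := by nlinarith [(by omega : (m : ℤ) ≤ 2)]
    obtain ⟨r, hr⟩ := hee_even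
    have : r ≤ 0 := by nlinarith
    omega
  rcases Nat.eq_zero_or_pos m with hm0 | hm0
  · exact hsum (hsig.eq_zero_of_orthogonal hh0 (by omega) hee.ge)
  · exact hnoiso ⟨e, hee, by omega⟩
end
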